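/- arXiv:2604.02232 — 4 statements merged into one kernel-verified Lean document; each statement's English description precedes it below -/
import Mathlib

section
/- Let p be a prime number and let i be a natural number with 2 ≤ i. Then p divides the cardinality of the type {f : Fin p → Fin i // Function.Surjective f} of surjective functions from Fin p to Fin i. -/
section Aux

variable (p i : ℕ)

instance auxSMul : SMul (Multiplicative (ZMod p))
    {f : ZMod p → Fin i // Function.Surjective f} :=
  ⟨fun g f => ⟨fun x => f.1 (x + g.toAdd), fun y => by
    obtain ⟨x, hx⟩ := f.2 y
    exact ⟨x - g.toAdd, by simp [hx]⟩⟩⟩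

theorem auxSMul_apply (g : Multiplicative (ZMod p))
    (f : {f : ZMod p → Fin i // Function.Surjective f}) (x : ZMod p) :
    (g • f).1 x = f.1 (x + g.toAdd) := rfl

/-- Rotation action of `Multiplicative (ZMod p)` on surjections `ZMod p → Fin i`. -/
instance auxAction : MulAction (Multiplicative (ZMod p))
    {f : ZMod p → Fin i // Function.Surjective f} where
  one_smul f := Subtype.ext (funext fun x => by
    rw [auxSMul_apply]; simp)
  mul_smul g h f := Subtype.ext (funext fun x => by
    rw [auxSMul_apply, auxSMul_apply, auxSMul_apply, toAdd_mul]
    ring)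

end Aux

/-- For `p` prime and `i ≥ 2`, `p` divides the number of surjections `Fin p → Fin i`. -/
theorem stmt_1 (p : ℕ) (hp : p.Prime) (i : ℕ) (hi : 2 ≤ i) :
    p ∣ Fintype.card {f : Fin p → Fin i // Function.Surjective f} := by
  haveI : Fact p.Prime := ⟨hp⟩
  haveI : NeZero p := ⟨hp.pos.ne'⟩
  -- transfer to domain `ZMod p`
  have e : {f : Fin p → Fin i // Function.Surjective f} ≃
      {f : ZMod p → Fin i // Function.Surjective f} := by
    refine Equiv.subtypeEquiv
      (Equiv.arrowCongr (Fintype.equivFinOfCardEq (ZMod.card p)).symm (Equiv.refl _)) ?_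
    intro f
    simp [Equiv.arrowCongr]
  rw [Fintype.card_congr e]
  have hpg : IsPGroup p (Multiplicative (ZMod p)) :=
    IsPGroup.of_card (n := 1) (by simp [Nat.card_eq_fintype_card, ZMod.card])
  have key := hpg.card_modEq_card_fixedPoints {f : ZMod p → Fin i // Function.Surjective f}
  -- fixed points are empty
  have hfix : Nat.card
      (MulAction.fixedPoints (Multiplicative (ZMod p))
        {f : ZMod p → Fin i // Function.Surjective f}) = 0 := by
    rw [Nat.card_eq_zero]
    left
    constructor
    rintro ⟨f, hf⟩
    -- f is constant
    have hconst : ∀ x : ZMod p, f.1 x = f.1 0 := by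
      intro x
      have h := hf (Multiplicative.ofAdd x)
      have := congrFun (congrArg Subtype.val h) 0
      rw [auxSMul_apply] at this
      simpa using this
    obtain ⟨y, hy⟩ := Fintype.exists_ne_of_one_lt_card
      (by simpa using hi.trans_lt' one_lt_two) (f.1 0)
    obtain ⟨x, hx⟩ := f.2 y
    exact hy ((hconst x ▸ hx).symm.trans rfl) |>.elim
  rw [hfix] at key
  rw [← Nat.card_eq_fintype_card]
  exact (Nat.modEq_zero_iff_dvd).mp key
end

section
/- Let p be a prime number and let k be a natural number with 1 ≤ k ≤ p. Write Epi(k,i) for the number of surjective functions from Fin k to Fin i, regarded as an integer. Then the ideal of ℤ generated by p together with the elements Epi(k,i) − Epi(p,i) for all i with 1 ≤ i ≤ p equals the ideal of ℤ generated by p together with the elements Epi(k,i) for all i with 2 ≤ i ≤ p. -/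
def epiZ (k i : ℕ) : ℤ :=
  (Fintype.card {f : Fin k → Fin i // Function.Surjective f} : ℤ)

/-!
Translating the source of a surjection `ZMod p → Fin i` by the elements of the cyclic group of
order `p` is an action of a `p`-group. A fixed point would be a constant surjection, which does not
exist once `i ≥ 2`, so every orbit has size `p` and `p ∣ Epi(p,i)`. Since moreover
`Epi(k,1) = Epi(p,1) = 1`, the generators `Epi(k,i) - Epi(p,i)` and `Epi(k,i)` agree modulo `p`
for `i ≥ 2`, and the generator for `i = 1` vanishes.
-/

open Function

lemma card_surjective_eq_one_of_unique {α β : Type*} [Nonempty α] [Unique β] :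
    Nat.card {f : α → β // Surjective f} = 1 := by
  have : Unique {f : α → β // Surjective f} :=
    { default := ⟨default, fun b => ⟨Classical.arbitrary α, Subsingleton.elim _ _⟩⟩
      uniq := fun _ => Subsingleton.elim _ _ }
  exact Nat.card_unique

lemma card_surjective_congr_left {α α' β : Type*} (e : α ≃ α') :
    Nat.card {f : α → β // Surjective f} = Nat.card {f : α' → β // Surjective f} :=
  Nat.card_congr <| (e.arrowCongr (Equiv.refl β)).subtypeEquiv fun f => by
    show _ ↔ Surjective (f ∘ e.symm)
    exact (e.symm.surjective_comp f).symm

section RightTranslation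

variable {G β : Type*} [Group G]

instance Surjective.mulActionRightTranslation : MulAction G {f : G → β // Surjective f} where
  smul g f := ⟨fun x => f.1 (x * g), f.2.comp (mul_right_surjective g)⟩
  one_smul f := Subtype.ext <| funext fun x => congrArg f.1 (mul_one x)
  mul_smul g h f := Subtype.ext <| funext fun x => congrArg f.1 (mul_assoc x g h).symm

@[simp]
lemma Surjective.rightTranslation_smul_apply (g : G) (f : {f : G → β // Surjective f}) (x : G) :
    (g • f).1 x = f.1 (x * g) :=
  rfl

lemma Surjective.notMem_fixedPoints_rightTranslation [Nontrivial β]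
    (f : {f : G → β // Surjective f}) : f ∉ MulAction.fixedPoints G {f : G → β // Surjective f} := by
  intro hf
  have hconst (g : G) : f.1 g = f.1 1 := by
    simpa using congrArg (fun f' : {f : G → β // Surjective f} => f'.1 1) (hf g)
  obtain ⟨b, b', hbb'⟩ := exists_pair_ne β
  obtain ⟨x, rfl⟩ := f.2 b
  obtain ⟨x', rfl⟩ := f.2 b'
  exact hbb' (by rw [hconst x, hconst x'])

lemma IsPGroup.dvd_card_surjective {p : ℕ} [Fact p.Prime] (hG : IsPGroup p G) [Nontrivial β] :
    p ∣ Nat.card {f : G → β // Surjective f} := by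
  by_contra h
  obtain ⟨f, hf⟩ := hG.nonempty_fixed_point_of_prime_not_dvd_card _ h
  exact Surjective.notMem_fixedPoints_rightTranslation f hf

end RightTranslation

lemma epiZ_one {k : ℕ} (hk : 0 < k) : epiZ k 1 = 1 := by
  have : Nonempty (Fin k) := ⟨⟨0, hk⟩⟩
  rw [epiZ, ← Nat.card_eq_fintype_card, card_surjective_eq_one_of_unique, Nat.cast_one]

lemma Nat.Prime.dvd_epiZ {p i : ℕ} (hp : p.Prime) (hi : 2 ≤ i) : (p : ℤ) ∣ epiZ p i := by
  have : Fact p.Prime := ⟨hp⟩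
  have : NeZero p := ⟨hp.ne_zero⟩
  have : Nontrivial (Fin i) := Fin.nontrivial_iff_two_le.mpr hi
  have hG : IsPGroup p (Multiplicative (ZMod p)) := IsPGroup.of_card (n := 1) (by simp)
  rw [epiZ, ← Nat.card_eq_fintype_card,
    card_surjective_congr_left ((ZMod.finEquiv p).toEquiv.trans Multiplicative.ofAdd)]
  exact Int.natCast_dvd_natCast.mpr hG.dvd_card_surjective

theorem stmt_2_general (p : ℕ) (hp : p.Prime) (k : ℕ) (hk1 : 1 ≤ k) :
    Ideal.span (insert (p : ℤ)
        {x : ℤ | ∃ i : ℕ, 1 ≤ i ∧ i ≤ p ∧ x = epiZ k i - epiZ p i}) =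
    Ideal.span (insert (p : ℤ)
        {x : ℤ | ∃ i : ℕ, 2 ≤ i ∧ i ≤ p ∧ x = epiZ k i}) := by
  have p_mem {S : Set ℤ} : (p : ℤ) ∈ Ideal.span (insert (p : ℤ) S) :=
    Ideal.subset_span (Set.mem_insert _ _)
  have epiZ_p_mem {S : Set ℤ} {i : ℕ} (hi : 2 ≤ i) : epiZ p i ∈ Ideal.span (insert (p : ℤ) S) := by
    obtain ⟨c, hc⟩ := hp.dvd_epiZ hi
    exact hc ▸ Ideal.mul_mem_right c _ p_mem
  apply le_antisymm <;> rw [Ideal.span_le] <;> rintro x (rfl | ⟨i, hi, hip, rfl⟩)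
  · exact p_mem
  · rcases hi.eq_or_lt with rfl | hi
    · simp [epiZ_one hk1, epiZ_one hp.pos]
    · exact Ideal.sub_mem _ (Ideal.subset_span (.inr ⟨i, hi, hip, rfl⟩)) (epiZ_p_mem hi)
  · exact p_mem
  · rw [← sub_add_cancel (epiZ k i) (epiZ p i)]
    exact Ideal.add_mem _ (Ideal.subset_span (.inr ⟨i, by omega, hip, rfl⟩)) (epiZ_p_mem hi)

/-- For a prime `p` and `1 ≤ k ≤ p`, the ideal of `ℤ` generated by `p` together with
`Epi(k,i) - Epi(p,i)` for `1 ≤ i ≤ p` equals the ideal generated by `p` together with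
`Epi(k,i)` for `2 ≤ i ≤ p`. -/
theorem stmt_2 (p : ℕ) (hp : p.Prime) (k : ℕ) (hk1 : 1 ≤ k) (hkp : k ≤ p) :
    Ideal.span (insert (p : ℤ)
        {x : ℤ | ∃ i : ℕ, 1 ≤ i ∧ i ≤ p ∧ x = epiZ k i - epiZ p i}) =
    Ideal.span (insert (p : ℤ)
        {x : ℤ | ∃ i : ℕ, 2 ≤ i ∧ i ≤ p ∧ x = epiZ k i}) :=
  stmt_2_general p hp k hk1
end

section
/- Let p be a prime number and let k be a natural number with 1 < k < p. Write Epi(k,i) for the number of surjective functions from Fin k to Fin i, regarded as an integer. Then the ideal of ℤ generated by p together with the elements Epi(k,i) − Epi(p,i) for all i with 1 ≤ i ≤ p is the unit ideal, i.e., all of ℤ. -/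
lemma epi_self (k : ℕ) :
    Fintype.card {f : Fin k → Fin k // Function.Surjective f} = k.factorial := by
  have e1 : {f : Fin k → Fin k // Function.Surjective f} ≃ Equiv.Perm (Fin k) :=
    { toFun := fun f => Equiv.ofBijective f.1
        ((Finite.surjective_iff_bijective).mp f.2)
      invFun := fun e => ⟨e, e.surjective⟩
      left_inv := fun f => rfl
      right_inv := fun e => by ext x; rfl }
  rw [Fintype.card_congr e1, Fintype.card_perm, Fintype.card_fin]

section action

variable (p i : ℕ) [NeZero p]

instance actInst : MulAction (Multiplicative (ZMod p))
    {f : ZMod p → Fin i // Function.Surjective f} where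
  smul g f := ⟨fun x => f.1 (x + g.toAdd),
    f.2.comp (fun y => ⟨y - g.toAdd, by simp⟩)⟩
  one_smul f := by
    apply Subtype.ext; funext x
    show f.1 (x + (1 : Multiplicative (ZMod p)).toAdd) = f.1 x
    simp
  mul_smul g h f := by
    apply Subtype.ext; funext x
    show f.1 (x + (Multiplicative.toAdd g + Multiplicative.toAdd h)) =
      f.1 (x + Multiplicative.toAdd g + Multiplicative.toAdd h)
    rw [add_assoc]

end action

lemma prime_dvd_epi (p i : ℕ) (hp : p.Prime) (hi : 2 ≤ i) :
    (p : ℤ) ∣ epiZ p i := by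
  haveI : Fact p.Prime := ⟨hp⟩
  haveI : NeZero p := ⟨hp.pos.ne'⟩
  set X := {f : ZMod p → Fin i // Function.Surjective f}
  have hpg : IsPGroup p (Multiplicative (ZMod p)) :=
    IsPGroup.of_card (n := 1) (by simp [Nat.card_eq_fintype_card, ZMod.card, pow_one])
  have hempty : IsEmpty (MulAction.fixedPoints (Multiplicative (ZMod p)) X) := by
    constructor
    rintro ⟨⟨f, hf⟩, hfix⟩
    have hconst : ∀ x : ZMod p, f x = f 0 := by
      intro x
      have := hfix (Multiplicative.ofAdd x)
      have h2 : f (0 + (Multiplicative.ofAdd x).toAdd) = f 0 :=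
        congrFun (congrArg Subtype.val this) 0
      simpa using h2
    obtain ⟨a, ha⟩ := hf ⟨0, by omega⟩
    obtain ⟨b, hb⟩ := hf ⟨1, by omega⟩
    have : (⟨0, by omega⟩ : Fin i) = ⟨1, by omega⟩ := by
      rw [← ha, ← hb, hconst a, hconst b]
    simp at this
  have hmod := hpg.card_modEq_card_fixedPoints X
  have h0 : Nat.card (MulAction.fixedPoints (Multiplicative (ZMod p)) X) = 0 :=
    Nat.card_of_isEmpty
  rw [h0] at hmod
  have hdvd : p ∣ Nat.card X := (Nat.modEq_zero_iff_dvd).mp hmod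
  -- transfer to Fin p
  have e : Fin p ≃ ZMod p := Fintype.equivOfCardEq (by simp [ZMod.card])
  have e2 : {f : Fin p → Fin i // Function.Surjective f} ≃ X := by
    refine Equiv.subtypeEquiv (e.arrowCongr (Equiv.refl (Fin i))) ?_
    intro f
    constructor
    · intro hf; exact hf.comp e.symm.surjective
    · intro hf; exact Function.Surjective.of_comp (g := ⇑e.symm) hf
  have hcard : Fintype.card {f : Fin p → Fin i // Function.Surjective f} = Nat.card X := by
    rw [Nat.card_eq_fintype_card, Fintype.card_congr e2]
  unfold epiZ
  rw [hcard]
  exact_mod_cast Int.natCast_dvd_natCast.mpr hdvd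

/-- For a prime `p` and `1 < k < p`, the ideal of `ℤ` generated by `p` together with
`Epi(k,i) - Epi(p,i)` for `1 ≤ i ≤ p` is the unit ideal. -/
theorem stmt_4 (p : ℕ) (hp : p.Prime) (k : ℕ) (hk1 : 1 < k) (hkp : k < p) :
    Ideal.span (insert (p : ℤ)
        {x : ℤ | ∃ i : ℕ, 1 ≤ i ∧ i ≤ p ∧ x = epiZ k i - epiZ p i}) = ⊤ := by
  set a : ℤ := epiZ k k - epiZ p k with ha
  have hmem : a ∈ Ideal.span (insert (p : ℤ)
      {x : ℤ | ∃ i : ℕ, 1 ≤ i ∧ i ≤ p ∧ x = epiZ k i - epiZ p i}) :=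
    Ideal.subset_span (Set.mem_insert_iff.mpr (Or.inr ⟨k, by omega, by omega, rfl⟩))
  have hpmem : (p : ℤ) ∈ Ideal.span (insert (p : ℤ)
      {x : ℤ | ∃ i : ℕ, 1 ≤ i ∧ i ≤ p ∧ x = epiZ k i - epiZ p i}) :=
    Ideal.subset_span (Set.mem_insert _ _)
  have hndvd : ¬ (p : ℤ) ∣ a := by
    intro hdvd
    have hd2 : (p : ℤ) ∣ epiZ p k := prime_dvd_epi p k hp (by omega)
    have : (p : ℤ) ∣ epiZ k k := by
      have := dvd_add hdvd hd2
      simpa [ha] using this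
    rw [epiZ, epi_self k] at this
    have : p ∣ k.factorial := by exact_mod_cast this
    exact absurd ((Nat.Prime.dvd_factorial hp).mp this) (by omega)
  have hcop : IsCoprime (p : ℤ) a :=
    (Nat.prime_iff_prime_int.mp hp).coprime_iff_not_dvd.mpr hndvd
  obtain ⟨u, v, huv⟩ := hcop
  rw [Ideal.eq_top_iff_one, ← huv]
  exact add_mem (Ideal.mul_mem_left _ u hpmem) (Ideal.mul_mem_left _ v hmem)
end

section
/- Let A, B, E, T be finite types, and let f : A → E, g : B → E, a : T → A, b : T → B be surjective functions satisfying f ∘ a = g ∘ b. Call a subset U of the set-theoretic fiber product {p : A × B // f p.1 = g p.2} good if both coordinate projections from U to A and from U to B are surjective. Then there exists a unique pair (U, t) where U is a good subset and t : T → U is a surjective function with fst ∘ t = a and snd ∘ t = b; explicitly, t must be the map x ↦ (a x, b x) and U must be its range. Moreover, the cardinality of U is at most the cardinality of T. -/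
/-- The set-theoretic fiber product of `f : A → E` and `g : B → E`. -/
abbrev FiberProd {A B E : Type} (f : A → E) (g : B → E) : Type :=
  {q : A × B // f q.1 = g q.2}

/-- A subset of the fiber product is *good* if both coordinate projections
restricted to it are surjective. -/
def IsGood {A B E : Type} {f : A → E} {g : B → E} (U : Set (FiberProd f g)) : Prop :=
  (Function.Surjective fun u : U => (u : FiberProd f g).1.1) ∧
  (Function.Surjective fun u : U => (u : FiberProd f g).1.2)

/-- Universal property of the pullback in the finite-coproduct completion of the
category of finite sets and surjections: given surjections `f, g, a, b` with
`f ∘ a = g ∘ b`, there is a unique pair `(U, t)` of a good subset `U` of the fiber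
product and a surjection `t : T → U` lifting `(a, b)`; explicitly `t` is
`x ↦ (a x, b x)` and `U` its range, and `|U| ≤ |T|`. -/
theorem stmt_6 {A B E T : Type} [Finite A] [Finite B] [Finite E] [Finite T]
    (f : A → E) (g : B → E) (a : T → A) (b : T → B)
    (hf : Function.Surjective f) (hg : Function.Surjective g)
    (ha : Function.Surjective a) (hb : Function.Surjective b)
    (hcomm : f ∘ a = g ∘ b) :
    (∃! p : Σ U : Set (FiberProd f g), T → U,
        IsGood p.1 ∧ Function.Surjective p.2 ∧
        (fun x : T => ((p.2 x : FiberProd f g)).1.1) = a ∧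
        (fun x : T => ((p.2 x : FiberProd f g)).1.2) = b) ∧
    (∀ (U : Set (FiberProd f g)) (t : T → U),
        IsGood U → Function.Surjective t →
        (fun x : T => ((t x : FiberProd f g)).1.1) = a →
        (fun x : T => ((t x : FiberProd f g)).1.2) = b →
        (∀ x : T, (t x : FiberProd f g) = ⟨(a x, b x), congrFun hcomm x⟩) ∧
        U = Set.range (fun x : T => (⟨(a x, b x), congrFun hcomm x⟩ : FiberProd f g)) ∧
        Nat.card U ≤ Nat.card T) := by
  classical
  set c : T → FiberProd f g := fun x => ⟨(a x, b x), congrFun hcomm x⟩ with hc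
  set U0 : Set (FiberProd f g) := Set.range c with hU0
  set t0 : T → U0 := fun x => ⟨c x, ⟨x, rfl⟩⟩ with ht0
  have key : ∀ (U : Set (FiberProd f g)) (t : T → U),
      IsGood U → Function.Surjective t →
      (fun x : T => ((t x : FiberProd f g)).1.1) = a →
      (fun x : T => ((t x : FiberProd f g)).1.2) = b →
      (∀ x : T, (t x : FiberProd f g) = ⟨(a x, b x), congrFun hcomm x⟩) ∧
      U = U0 ∧ Nat.card U ≤ Nat.card T := by
    intro U t _ hsurj h1 h2
    have hx : ∀ x : T, (t x : FiberProd f g) = c x := by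
      intro x
      exact Subtype.ext (Prod.ext (congrFun h1 x) (congrFun h2 x))
    refine ⟨hx, ?_, ?_⟩
    · ext u
      constructor
      · intro hu
        obtain ⟨x, hxu⟩ := hsurj ⟨u, hu⟩
        exact ⟨x, by rw [← hx x, hxu]⟩
      · rintro ⟨x, rfl⟩
        have := hx x
        rw [← this]
        exact (t x).2
    · exact Nat.card_le_card_of_surjective t hsurj
  have ht0surj : Function.Surjective t0 := by
    rintro ⟨u, x, rfl⟩
    exact ⟨x, rfl⟩
  have hcanon : IsGood U0 ∧ Function.Surjective t0 ∧
      (fun x : T => ((t0 x : FiberProd f g)).1.1) = a ∧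
      (fun x : T => ((t0 x : FiberProd f g)).1.2) = b := by
    refine ⟨⟨?_, ?_⟩, ht0surj, rfl, rfl⟩
    · intro x0
      obtain ⟨x, rfl⟩ := ha x0
      exact ⟨⟨c x, ⟨x, rfl⟩⟩, rfl⟩
    · intro y0
      obtain ⟨x, rfl⟩ := hb y0
      exact ⟨⟨c x, ⟨x, rfl⟩⟩, rfl⟩
  constructor
  · refine ⟨⟨U0, t0⟩, hcanon, ?_⟩
    rintro ⟨U, t⟩ ⟨hgood, hsurj, h1, h2⟩
    obtain ⟨hx, hUeq, -⟩ := key U t hgood hsurj h1 h2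
    subst hUeq
    simp only [Sigma.mk.inj_iff, heq_eq_eq]
    exact ⟨trivial, funext fun x => Subtype.ext (hx x)⟩
  · intro U t hgood hsurj h1 h2
    obtain ⟨hx, hUeq, hcard⟩ := key U t hgood hsurj h1 h2
    exact ⟨hx, hUeq, hcard⟩
end
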